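/- For R > 0 let â(v) := √(R² - v²) for 0 ≤ v ≤ R, and define C(R) := (2/π) ∫₀^{R} erfc(√2 · v) · v · e^{v²} · [ e^{-(â(v) - R)²} - e^{-(â(v) + R)²} + √π · (â(v) - R) · erf(â(v) - R) - √π · (â(v) + R) · erf(â(v) + R) ] dv. Then lim_{R→∞} C(R)/R = -(2√2 - 2)/√π. (C(R) is the covariance between the numbers of complex and real eigenvalues of the infinite real Ginibre ensemble in the centred disc of radius R, and the limit gives its linear asymptotic growth.) -/

import Mathlib

open MeasureTheory Real Filter

/-- The error function `erf(x) = (2/√π) ∫₀^x e^(-t²) dt`. -/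
noncomputable def erf (x : ℝ) : ℝ := (2 / Real.sqrt π) * ∫ t in (0:ℝ)..x, Real.exp (-t ^ 2)

/-- The complementary error function `erfc(x) = 1 - erf(x)`. -/
noncomputable def erfc (x : ℝ) : ℝ := 1 - erf x

/-- The covariance between the numbers of complex and real eigenvalues of the infinite
real Ginibre ensemble in the centred disc of radius `R`, with `â(v) = √(R² - v²)`. -/
noncomputable def covGinOE (R : ℝ) : ℝ :=
  (2 / π) * ∫ v in (0:ℝ)..R,
    erfc (Real.sqrt 2 * v) * v * Real.exp (v ^ 2) *
      (Real.exp (-(Real.sqrt (R ^ 2 - v ^ 2) - R) ^ 2)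
        - Real.exp (-(Real.sqrt (R ^ 2 - v ^ 2) + R) ^ 2)
        + Real.sqrt π * (Real.sqrt (R ^ 2 - v ^ 2) - R) * erf (Real.sqrt (R ^ 2 - v ^ 2) - R)
        - Real.sqrt π * (Real.sqrt (R ^ 2 - v ^ 2) + R) * erf (Real.sqrt (R ^ 2 - v ^ 2) + R))

/-!
Write the bracket as `h(â - R) - h(â + R)` with `h(x) = e^{-x²} + √π x erf x`, the primitive of
`√π erf` with `h 0 = 1`. Since `|h x| ≤ 1 + 2√π |x|` and `0 ≤ â ≤ R`, the bracket is at most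
`2 + 4√π R` in absolute value, uniformly in `v`; for fixed `v`, `â - R → 0` and `(â + R)/R → 2`,
so the bracket divided by `R` tends to `-2√π`. Dominated convergence, with a multiple of the
weight `c(v) = erfc(√2 v) v e^{v²}` as dominating function, gives
`C(R)/R → -(4/√π) ∫₀^∞ c`, and `∫₀^∞ c = (√2 - 1)/2` because `c` is the derivative of
`erfc(√2 v) e^{v²}/2 + (√2/2) erf v`, whose first summand is at most `e^{-v²}`.
-/

open Set Topology Interval

lemma integrable_exp_neg_sq : Integrable fun t : ℝ => exp (-t ^ 2) := by
  simpa using integrable_exp_neg_mul_sq one_pos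

lemma integral_exp_neg_sq : ∫ t : ℝ, exp (-t ^ 2) = √π := by
  simpa using integral_gaussian 1

lemma tendsto_exp_neg_sq_atTop : Tendsto (fun x : ℝ => exp (-x ^ 2)) atTop (𝓝 0) :=
  tendsto_exp_atBot.comp (tendsto_neg_atTop_atBot.comp (tendsto_pow_atTop two_ne_zero))

@[simp]
lemma erf_zero : erf 0 = 0 := by simp [erf]

lemma continuous_erf : Continuous erf :=
  continuous_const.mul (integrable_exp_neg_sq.continuous_primitive 0)

lemma hasDerivAt_erf (x : ℝ) : HasDerivAt erf (2 / √π * exp (-x ^ 2)) x := by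
  have hc : Continuous fun t : ℝ => exp (-t ^ 2) := by fun_prop
  exact (intervalIntegral.integral_hasDerivAt_right integrable_exp_neg_sq.intervalIntegrable
    (hc.stronglyMeasurableAtFilter _ _) hc.continuousAt).const_mul _

lemma tendsto_erf_atTop : Tendsto erf atTop (𝓝 1) := by
  have h := (intervalIntegral_tendsto_integral_Ioi 0 integrable_exp_neg_sq.integrableOn
    tendsto_id).const_mul (2 / √π)
  have hΙ : ∫ t in Ioi (0:ℝ), exp (-t ^ 2) = √π / 2 := by simpa using integral_gaussian_Ioi 1
  have hπ : 0 < √π := sqrt_pos.2 pi_pos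
  rwa [hΙ, show 2 / √π * (√π / 2) = 1 by field_simp] at h

lemma abs_erf_le_two (x : ℝ) : |erf x| ≤ 2 := by
  have h : |∫ t in (0:ℝ)..x, exp (-t ^ 2)| ≤ √π := calc
    _ ≤ ∫ t in Ι 0 x, ‖exp (-t ^ 2)‖ := intervalIntegral.norm_integral_le_integral_norm_uIoc
    _ ≤ ∫ t, ‖exp (-t ^ 2)‖ :=
      setIntegral_le_integral integrable_exp_neg_sq.norm (.of_forall fun _ => norm_nonneg _)
    _ = √π := by simp [integral_exp_neg_sq]
  have hπ : 0 < √π := sqrt_pos.2 pi_pos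
  rw [erf, abs_mul, abs_of_pos (by positivity)]
  calc _ ≤ 2 / √π * √π := by gcongr
    _ = 2 := by field_simp

@[simp]
lemma erfc_zero : erfc 0 = 1 := by simp [erfc]

lemma continuous_erfc : Continuous erfc := continuous_const.sub continuous_erf

lemma hasDerivAt_erfc (x : ℝ) : HasDerivAt erfc (-(2 / √π * exp (-x ^ 2))) x :=
  (hasDerivAt_erf x).const_sub 1

lemma erfc_eq_integral_Ioi {x : ℝ} (hx : 0 ≤ x) :
    erfc x = 2 / √π * ∫ t in Ioi x, exp (-t ^ 2) := by
  have hsplit : (∫ t in Ioc 0 x, exp (-t ^ 2)) + ∫ t in Ioi x, exp (-t ^ 2) = √π / 2 := by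
    rw [← setIntegral_union (Ioc_disjoint_Ioi le_rfl) measurableSet_Ioi
      integrable_exp_neg_sq.integrableOn integrable_exp_neg_sq.integrableOn,
      Ioc_union_Ioi_eq_Ioi hx]
    simpa using integral_gaussian_Ioi 1
  have hπ : 0 < √π := sqrt_pos.2 pi_pos
  rw [erfc, erf, intervalIntegral.integral_of_le hx, eq_sub_of_add_eq hsplit]
  field_simp
  ring

lemma erfc_nonneg {x : ℝ} (hx : 0 ≤ x) : 0 ≤ erfc x := by
  rw [erfc_eq_integral_Ioi hx]
  exact mul_nonneg (by positivity) (setIntegral_nonneg measurableSet_Ioi fun t _ => (exp_pos _).le)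

/-- On `t > x ≥ 0` we have `t² ≥ x² + (t - x)²`, and the shifted Gaussian integrates to `√π`. -/
lemma erfc_le_two_mul_exp_neg_sq {x : ℝ} (hx : 0 ≤ x) : erfc x ≤ 2 * exp (-x ^ 2) := by
  have hint : Integrable fun t : ℝ => exp (-x ^ 2) * exp (-(t - x) ^ 2) :=
    (integrable_exp_neg_sq.comp_sub_right x).const_mul _
  have htail : ∫ t in Ioi x, exp (-t ^ 2) ≤ exp (-x ^ 2) * √π := calc
    _ ≤ ∫ t in Ioi x, exp (-x ^ 2) * exp (-(t - x) ^ 2) := by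
      refine setIntegral_mono_on integrable_exp_neg_sq.integrableOn hint.integrableOn
        measurableSet_Ioi fun t ht => ?_
      rw [← exp_add, exp_le_exp]
      nlinarith [ht.out]
    _ ≤ ∫ t, exp (-x ^ 2) * exp (-(t - x) ^ 2) :=
      setIntegral_le_integral hint (.of_forall fun t => by positivity)
    _ = exp (-x ^ 2) * √π := by
      rw [integral_const_mul, integral_sub_right_eq_self (fun t => exp (-t ^ 2)),
        integral_exp_neg_sq]
  have hπ : 0 < √π := sqrt_pos.2 pi_pos
  rw [erfc_eq_integral_Ioi hx]
  calc _ ≤ 2 / √π * (exp (-x ^ 2) * √π) := by gcongr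
    _ = 2 * exp (-x ^ 2) := by field_simp

/-- A primitive of `√π · erf`, normalised by `erfPrimitive 0 = 1`. -/
noncomputable def erfPrimitive (x : ℝ) : ℝ := exp (-x ^ 2) + √π * x * erf x

lemma continuous_erfPrimitive : Continuous erfPrimitive := by
  unfold erfPrimitive; have := continuous_erf; fun_prop

lemma abs_erfPrimitive_le (x : ℝ) : |erfPrimitive x| ≤ 1 + 2 * √π * |x| := by
  have hexp : |exp (-x ^ 2)| ≤ 1 := by
    rw [abs_of_pos (exp_pos _), exp_le_one_iff]
    exact neg_nonpos.2 (sq_nonneg x)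
  have herf : |√π * x * erf x| ≤ √π * |x| * 2 := by
    rw [abs_mul, abs_mul, abs_of_pos (sqrt_pos.2 pi_pos)]
    gcongr
    exact abs_erf_le_two x
  calc |erfPrimitive x| ≤ |exp (-x ^ 2)| + |√π * x * erf x| := abs_add_le _ _
    _ ≤ 1 + 2 * √π * |x| := by linarith

lemma tendsto_erfPrimitive_div_atTop : Tendsto (fun x => erfPrimitive x / x) atTop (𝓝 √π) := by
  have h := (tendsto_exp_neg_sq_atTop.div_atTop tendsto_id).add
    (tendsto_erf_atTop.const_mul √π)
  rw [zero_add, mul_one] at h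
  refine h.congr' ?_
  filter_upwards [eventually_ne_atTop 0] with x hx
  simp only [id, erfPrimitive]
  field_simp

theorem tendsto_intervalIntegral_of_dominated_Ioi {E : Type*} [NormedAddCommGroup E]
    [NormedSpace ℝ E] {F : ℝ → ℝ → E} {f : ℝ → E} {bound : ℝ → ℝ} {a : ℝ}
    (hF_meas : ∀ R, AEStronglyMeasurable (F R) (volume.restrict (Ioi a)))
    (h_bound : ∀ᶠ R in atTop, ∀ v ∈ Ioc a R, ‖F R v‖ ≤ bound v)
    (bound_integrable : IntegrableOn bound (Ioi a))
    (h_lim : ∀ v > a, Tendsto (fun R => F R v) atTop (𝓝 (f v))) :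
    Tendsto (fun R => ∫ v in a..R, F R v) atTop (𝓝 (∫ v in Ioi a, f v)) := by
  have h_ind : ∀ᵐ v ∂volume.restrict (Ioi a),
      Tendsto (fun R => (Ioc a R).indicator (F R) v) atTop (𝓝 (f v)) := by
    filter_upwards [ae_restrict_mem measurableSet_Ioi] with v hv
    refine (h_lim v hv).congr' ?_
    filter_upwards [eventually_ge_atTop v] with R hR
    rw [indicator_of_mem (show v ∈ Ioc a R from ⟨hv, hR⟩)]
  have h_ind_bound : ∀ᶠ R in atTop, ∀ᵐ v ∂volume.restrict (Ioi a),
      ‖(Ioc a R).indicator (F R) v‖ ≤ bound v := by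
    filter_upwards [h_bound] with R hR
    filter_upwards [ae_restrict_mem measurableSet_Ioi] with v hv
    by_cases hvR : v ∈ Ioc a R
    · rw [indicator_of_mem hvR]; exact hR v hvR
    · obtain ⟨S, hS, hvS⟩ := (h_bound.and (eventually_ge_atTop v)).exists
      rw [indicator_of_notMem hvR, norm_zero]
      exact (norm_nonneg _).trans (hS v ⟨hv, hvS⟩)
  refine (tendsto_integral_filter_of_dominated_convergence bound
    (.of_forall fun R => (hF_meas R).indicator measurableSet_Ioc) h_ind_bound
    bound_integrable h_ind).congr' ?_
  filter_upwards [eventually_ge_atTop a] with R hR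
  rw [intervalIntegral.integral_of_le hR, integral_indicator measurableSet_Ioc,
    Measure.restrict_restrict measurableSet_Ioc, inter_eq_left.2 Ioc_subset_Ioi_self]

namespace GinOE

noncomputable def weight (v : ℝ) : ℝ := erfc (√2 * v) * v * exp (v ^ 2)

noncomputable def weightPrimitive (v : ℝ) : ℝ := erfc (√2 * v) * exp (v ^ 2) / 2 + √2 / 2 * erf v

lemma weightPrimitive_zero : weightPrimitive 0 = 1 / 2 := by simp [weightPrimitive]

lemma continuous_weight : Continuous weight := by
  unfold weight; have := continuous_erfc; fun_prop

lemma weight_nonneg {v : ℝ} (hv : 0 ≤ v) : 0 ≤ weight v := by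
  have := erfc_nonneg (x := √2 * v) (by positivity)
  unfold weight; positivity

lemma exp_neg_sq_sqrt_two_mul_mul_exp_sq (v : ℝ) :
    exp (-(√2 * v) ^ 2) * exp (v ^ 2) = exp (-v ^ 2) := by
  rw [← exp_add, mul_pow, sq_sqrt zero_le_two]; ring_nf

lemma hasDerivAt_weightPrimitive (v : ℝ) : HasDerivAt weightPrimitive (weight v) v := by
  have hlin : HasDerivAt (fun y : ℝ => √2 * y) √2 v := by
    simpa using (hasDerivAt_id v).const_mul √2
  have h := ((((hasDerivAt_erfc _).comp v hlin).mul (hasDerivAt_pow 2 v).exp).div_const 2).add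
    ((hasDerivAt_erf v).const_mul (√2 / 2))
  refine h.congr_deriv ?_
  have hπ : 0 < √π := sqrt_pos.2 pi_pos
  rw [weight, Function.comp_apply, ← exp_neg_sq_sqrt_two_mul_mul_exp_sq v]
  field_simp
  ring

/-- The `erfc` part decays because `erfc(√2 v) e^{v²} ≤ 2 e^{-v²}`. -/
lemma tendsto_weightPrimitive_atTop : Tendsto weightPrimitive atTop (𝓝 (√2 / 2)) := by
  have hdecay : Tendsto (fun v => erfc (√2 * v) * exp (v ^ 2) / 2) atTop (𝓝 0) := by
    refine tendsto_of_tendsto_of_tendsto_of_le_of_le' tendsto_const_nhds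
      tendsto_exp_neg_sq_atTop ?_ ?_
    all_goals filter_upwards [eventually_ge_atTop 0] with v hv
    · have := erfc_nonneg (x := √2 * v) (by positivity)
      positivity
    · have h := erfc_le_two_mul_exp_neg_sq (x := √2 * v) (by positivity)
      have := exp_neg_sq_sqrt_two_mul_mul_exp_sq v
      nlinarith [exp_pos (v ^ 2)]
  have h := hdecay.add (tendsto_erf_atTop.const_mul (√2 / 2))
  rwa [zero_add, mul_one] at h

lemma integral_weight_Ioi : ∫ v in Ioi 0, weight v = (√2 - 1) / 2 := by
  rw [integral_Ioi_of_hasDerivAt_of_nonneg' (fun v _ => hasDerivAt_weightPrimitive v)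
    (fun _ hv => weight_nonneg hv.out.le) tendsto_weightPrimitive_atTop, weightPrimitive_zero]
  ring

lemma integrableOn_weight_Ioi : IntegrableOn weight (Ioi 0) :=
  integrableOn_Ioi_deriv_of_nonneg' (fun v _ => hasDerivAt_weightPrimitive v)
    (fun _ hv => weight_nonneg hv.out.le) tendsto_weightPrimitive_atTop

noncomputable def bracket (R v : ℝ) : ℝ :=
  erfPrimitive (√(R ^ 2 - v ^ 2) - R) - erfPrimitive (√(R ^ 2 - v ^ 2) + R)

lemma covGinOE_eq (R : ℝ) : covGinOE R = 2 / π * ∫ v in 0..R, weight v * bracket R v := by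
  unfold covGinOE weight bracket erfPrimitive
  congr 1
  exact intervalIntegral.integral_congr fun v _ => by ring

lemma continuous_bracket (R : ℝ) : Continuous (bracket R) := by
  unfold bracket; have := continuous_erfPrimitive; fun_prop

lemma abs_bracket_le {R : ℝ} (hR : 0 ≤ R) (v : ℝ) : |bracket R v| ≤ 2 + 4 * √π * R := by
  set a := √(R ^ 2 - v ^ 2)
  have ha : 0 ≤ a := sqrt_nonneg _
  have haR : a ≤ R := (sqrt_le_sqrt (by nlinarith)).trans (sqrt_sq hR).le
  have h₁ := abs_erfPrimitive_le (a - R)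
  have h₂ := abs_erfPrimitive_le (a + R)
  rw [abs_of_nonpos (by linarith : a - R ≤ 0)] at h₁
  rw [abs_of_nonneg (by linarith : 0 ≤ a + R)] at h₂
  calc |bracket R v| ≤ |erfPrimitive (a - R)| + |erfPrimitive (a + R)| := abs_sub _ _
    _ ≤ 2 + 4 * √π * R := by linarith

lemma tendsto_sqrt_sq_sub_sq_add_atTop (v : ℝ) :
    Tendsto (fun R => √(R ^ 2 - v ^ 2) + R) atTop atTop :=
  tendsto_atTop_mono (fun _ => le_add_of_nonneg_left (sqrt_nonneg _)) tendsto_id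

lemma tendsto_sqrt_sq_sub_sq_sub (v : ℝ) :
    Tendsto (fun R => √(R ^ 2 - v ^ 2) - R) atTop (𝓝 0) := by
  have h := (tendsto_const_nhds (x := -v ^ 2)).div_atTop (tendsto_sqrt_sq_sub_sq_add_atTop v)
  refine h.congr' ?_
  filter_upwards [eventually_gt_atTop |v|] with R hR
  have hR0 : 0 < √(R ^ 2 - v ^ 2) + R :=
    add_pos_of_nonneg_of_pos (sqrt_nonneg _) ((abs_nonneg v).trans_lt hR)
  have hsq : √(R ^ 2 - v ^ 2) ^ 2 = R ^ 2 - v ^ 2 :=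
    sq_sqrt (by nlinarith [sq_abs v, abs_nonneg v])
  field_simp
  linear_combination -hsq

lemma tendsto_bracket_div (v : ℝ) : Tendsto (fun R => bracket R v / R) atTop (𝓝 (-2 * √π)) := by
  have hsub := tendsto_sqrt_sq_sub_sq_sub v
  have hadd := tendsto_sqrt_sq_sub_sq_add_atTop v
  have h₁ : Tendsto (fun R => erfPrimitive (√(R ^ 2 - v ^ 2) - R) / R) atTop (𝓝 0) :=
    ((continuous_erfPrimitive.tendsto 0).comp hsub).div_atTop tendsto_id
  have h₂ : Tendsto (fun R => 2 + (√(R ^ 2 - v ^ 2) - R) / R) atTop (𝓝 2) := by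
    simpa using (hsub.div_atTop tendsto_id).const_add 2
  have h₃ := tendsto_erfPrimitive_div_atTop.comp hadd
  have h := h₁.sub (h₂.mul h₃)
  rw [zero_sub, ← neg_mul] at h
  refine h.congr' ?_
  filter_upwards [eventually_gt_atTop 0] with R hR
  have : 0 < √(R ^ 2 - v ^ 2) + R := by positivity
  simp only [Function.comp_apply, bracket]
  field_simp
  ring

lemma norm_weight_mul_bracket_div_le {R v : ℝ} (hR : 1 ≤ R) (hv : 0 ≤ v) :
    ‖weight v * (bracket R v / R)‖ ≤ (2 + 4 * √π) * weight v := by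
  have hR0 : 0 < R := one_pos.trans_le hR
  have hw := weight_nonneg hv
  have hB : |bracket R v| / R ≤ 2 + 4 * √π := by
    rw [div_le_iff₀ hR0]
    nlinarith [abs_bracket_le hR0.le v]
  rw [norm_mul, norm_div, norm_of_nonneg hw, norm_of_nonneg hR0.le, Real.norm_eq_abs, mul_comm]
  gcongr

end GinOE

theorem covariance_GinOE_asymptotics :
    Tendsto (fun R : ℝ => covGinOE R / R) atTop
      (nhds (-(2 * Real.sqrt 2 - 2) / Real.sqrt π)) := by
  have hlim : Tendsto (fun R => ∫ v in 0..R, GinOE.weight v * (GinOE.bracket R v / R)) atTop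
      (𝓝 (∫ v in Ioi 0, GinOE.weight v * (-2 * √π))) :=
    tendsto_intervalIntegral_of_dominated_Ioi
      (fun R => (GinOE.continuous_weight.mul
        ((GinOE.continuous_bracket R).div_const R)).aestronglyMeasurable)
      ((eventually_ge_atTop 1).mono fun _ hR v hv =>
        GinOE.norm_weight_mul_bracket_div_le hR hv.1.le)
      (GinOE.integrableOn_weight_Ioi.const_mul _)
      (fun v _ => (GinOE.tendsto_bracket_div v).const_mul (GinOE.weight v))
  rw [integral_mul_const, GinOE.integral_weight_Ioi] at hlim
  convert hlim.const_mul (2 / π) using 2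
  · rw [GinOE.covGinOE_eq, mul_div_assoc, ← intervalIntegral.integral_div]
    simp only [mul_div_assoc]
  · have hπ : 0 < √π := sqrt_pos.2 pi_pos
    have hπsq : √π ^ 2 = π := sq_sqrt pi_pos.le
    field_simp
    rw [hπsq]
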